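/- arXiv:1511.02322 — 3 statements merged into one kernel-verified Lean document; each statement's English description precedes it below -/
import Mathlib

section
/- Suppose r ∈ {4,6}, ω is a root of unity in the algebraic closure of ℚ of order t, ζ_r a primitive r-th root of unity, and ω(1+ζ_r) lies in an imaginary quadratic field M. If r = 4, then M = ℚ(√-1) or M = ℚ(√-2); if r = 6, then M = ℚ(√-3). -/
/-!
Write `α = ω (1 + ζ)`. Since `(1 + ζ)² = c ζ` with `c = 2` for `r = 4` and `c = 3`
for `r = 6`, `α² = c u` for the root of unity `u = ζ ω²`, so `α ᾱ = |α|² = c`.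
Complex conjugation preserves the imaginary quadratic field `M`, so `s = α + ᾱ` is
rational; then `s² / c = u + ū + 2` is a rational algebraic integer, i.e. `s² = c k`
with `k ∈ {0, …, 4}` because `s² ≤ 4 |α|²`. Only the `k` for which `c k` is a rational
square survive, and for them `α - ᾱ ∈ M` squares to `c (k - 4) ∈ {-8, -4}` resp.
`{-12, -3}`, which determines `M`.
-/

open Complex ComplexConjugate IntermediateField SubfieldClass

theorem normSq_eq_of_sq_eq_mul {c : ℝ} (hc : 0 ≤ c) {α u : ℂ} (hu : ‖u‖ = 1)
    (h : α ^ 2 = c * u) : normSq α = c := by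
  have := congrArg norm h
  rwa [norm_pow, norm_mul, hu, mul_one, norm_real, Real.norm_of_nonneg hc, Complex.sq_norm] at this

theorem isIntegral_add_conj_of_pow_eq_one {u : ℂ} {n : ℕ} (hn : n ≠ 0) (hu : u ^ n = 1) :
    IsIntegral ℤ (u + conj u) := by
  have hu' : conj u ^ n = 1 := by rw [← map_pow, hu, map_one]
  exact (IsIntegral.of_pow (Nat.pos_of_ne_zero hn) (hu ▸ isIntegral_one)).add
    (IsIntegral.of_pow (Nat.pos_of_ne_zero hn) (hu' ▸ isIntegral_one))

theorem exists_int_sub_conj_sq_eq_mul {c : ℚ} (hc : 0 < c) {α u : ℂ} {n : ℕ} (hn : n ≠ 0)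
    (hu : u ^ n = 1) (hαu : α ^ 2 = c * u) {s : ℚ} (hs : α + conj α = s) :
    ∃ k : ℤ, 0 ≤ k ∧ k ≤ 4 ∧ IsSquare (c * k) ∧ (α - conj α) ^ 2 = c * (k - 4) := by
  have hnormSq : normSq α = c :=
    normSq_eq_of_sq_eq_mul (by positivity) (norm_eq_one_of_pow_eq_one hu hn) (mod_cast hαu)
  have hαα : α * conj α = c := by rw [mul_conj, hnormSq]; norm_cast
  have hαu' : conj α ^ 2 = c * conj u := by simpa using congrArg conj hαu
  have hcC : (c : ℂ) ≠ 0 := by exact_mod_cast hc.ne'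
  have hsum : ((s ^ 2 / c - 2 : ℚ) : ℂ) = u + conj u := by
    push_cast
    rw [← hs]
    field_simp
    linear_combination hαu + hαu' + 2 * hαα
  obtain ⟨m, hm⟩ := IsIntegrallyClosed.isIntegral_iff.mp <|
    (isIntegral_algebraMap_iff (algebraMap ℚ ℂ).injective).mp
      (hsum ▸ isIntegral_add_conj_of_pow_eq_one hn hu)
  have hsc : s ^ 2 = c * (m + 2) := by
    simp only [eq_intCast] at hm
    field_simp at hm
    linarith
  have hs_le : s ^ 2 ≤ c * 4 := by
    have hre : 2 * α.re = s := by simpa [two_mul] using congrArg re hs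
    have : (s : ℝ) ^ 2 ≤ c * 4 := by
      rw [← hre, ← hnormSq]
      nlinarith [re_sq_le_normSq α]
    exact_mod_cast this
  refine ⟨m + 2, ?_, ?_, ⟨s, by push_cast; rw [← hsc, sq]⟩, ?_⟩
  · have : (0 : ℚ) ≤ m + 2 := nonneg_of_mul_nonneg_right (hsc ▸ sq_nonneg s) hc
    exact_mod_cast this
  · have : (m : ℚ) + 2 ≤ 4 := le_of_mul_le_mul_left (hsc ▸ hs_le) hc
    exact_mod_cast this
  · have hscC : (s : ℂ) ^ 2 = c * (m + 2) := by exact_mod_cast hsc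
    push_cast
    linear_combination (α + conj α + s) * hs + hscC - 4 * hαα

theorem I_mul_sqrt_sq {d : ℝ} (hd : 0 ≤ d) : (I * √d) ^ 2 = -d := by
  rw [mul_pow, I_sq, ← ofReal_pow, Real.sq_sqrt hd]
  ring

section QuadraticSubfield

variable {M : IntermediateField ℚ ℂ}

theorem exists_eq_rat_add_rat_mul (hM : Module.finrank ℚ M = 2) {z x : ℂ} (hz : z ∈ M)
    (hz_im : z.im ≠ 0) (hx : x ∈ M) : ∃ p q : ℚ, x = p + q * z := by
  have hind : LinearIndependent ℚ ![(1 : M), ⟨z, hz⟩] := by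
    rw [LinearIndependent.pair_iff]
    intro p q h
    have h' : (p : ℂ) + q * z = 0 := by
      simpa [Rat.smul_def] using congrArg (fun y : M => (y : ℂ)) h
    have hq : q = 0 := by
      simpa [hz_im] using congrArg Complex.im h'
    subst hq
    simpa using h'
  have hxs : (⟨x, hx⟩ : M) ∈ Submodule.span ℚ (Set.range ![(1 : M), ⟨z, hz⟩]) := by
    rw [hind.span_eq_top_of_card_eq_finrank (by simp [hM])]
    exact Submodule.mem_top
  rw [Matrix.range_cons, Matrix.range_cons, Matrix.range_empty, Set.union_empty,
    Set.singleton_union, Submodule.mem_span_pair] at hxs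
  obtain ⟨p, q, h⟩ := hxs
  exact ⟨p, q, by simpa [Rat.smul_def] using (congrArg Subtype.val h).symm⟩

theorem eq_adjoin_of_im_ne_zero (hM : Module.finrank ℚ M = 2) {z : ℂ} (hz : z ∈ M)
    (hz_im : z.im ≠ 0) : M = adjoin ℚ {z} := by
  refine le_antisymm (fun x hx => ?_) (adjoin_simple_le_iff.mpr hz)
  obtain ⟨p, q, rfl⟩ := exists_eq_rat_add_rat_mul hM hz hz_im hx
  have hz' : z ∈ adjoin ℚ {z} := mem_adjoin_simple_self ℚ z
  exact add_mem (ratCast_mem _ p) (mul_mem (ratCast_mem _ q) hz')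

theorem eq_adjoin_of_sq_eq (hM : Module.finrank ℚ M = 2) {g y : ℂ} {q : ℚ} (hg : g ∈ M)
    (hq : q ≠ 0) (hy : y.im ≠ 0) (h : g ^ 2 = (q * y) ^ 2) : M = adjoin ℚ {y} := by
  have hyM : y ∈ M := by
    have hqC : (q : ℂ) ≠ 0 := by exact_mod_cast hq
    rcases sq_eq_sq_iff_eq_or_eq_neg.mp h with h | h
    · rw [show y = (q : ℂ)⁻¹ * g by rw [h]; field_simp]
      exact mul_mem (inv_mem (ratCast_mem M q)) hg
    · rw [show y = (q : ℂ)⁻¹ * -g by rw [h]; field_simp]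
      exact mul_mem (inv_mem (ratCast_mem M q)) (neg_mem hg)
  exact eq_adjoin_of_im_ne_zero hM hyM hy

theorem exists_rat_add_conj_eq (hM : Module.finrank ℚ M = 2)
    (hMim : ∃ z : M, (z : ℂ).im ≠ 0) {x : ℂ} (hx : x ∈ M) : ∃ s : ℚ, x + conj x = s := by
  obtain ⟨⟨z, hz⟩, hz_im⟩ := hMim
  obtain ⟨p, q, hzz⟩ := exists_eq_rat_add_rat_mul hM hz hz_im (pow_mem hz 2)
  have hzz' : conj z ^ 2 = p + q * conj z := by simpa using congrArg conj hzz
  have htr : z + conj z = q := by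
    have hne : z - conj z ≠ 0 := by simpa [sub_conj, Complex.ext_iff] using hz_im
    have : (z - conj z) * (z + conj z - q) = 0 := by linear_combination hzz - hzz'
    linear_combination (mul_eq_zero.mp this).resolve_left hne
  obtain ⟨a, b, rfl⟩ := exists_eq_rat_add_rat_mul hM hz hz_im hx
  refine ⟨2 * a + b * q, ?_⟩
  simp only [map_add, map_mul, map_ratCast]
  push_cast
  linear_combination (b : ℂ) * htr

theorem conj_mem_of_finrank_eq_two (hM : Module.finrank ℚ M = 2)
    (hMim : ∃ z : M, (z : ℂ).im ≠ 0) {x : ℂ} (hx : x ∈ M) : conj x ∈ M := by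
  obtain ⟨s, hs⟩ := exists_rat_add_conj_eq hM hMim hx
  rw [show conj x = s - x by rw [← hs]; ring]
  exact sub_mem (ratCast_mem M s) hx

theorem eq_adjoin_of_sq_eq_two_mul (hM : Module.finrank ℚ M = 2)
    (hMim : ∃ z : M, (z : ℂ).im ≠ 0) {α u : ℂ} {n : ℕ} (hn : n ≠ 0) (hu : u ^ n = 1)
    (hα : α ∈ M) (hαu : α ^ 2 = 2 * u) :
    M = adjoin ℚ {I} ∨ M = adjoin ℚ {I * (√2 : ℂ)} := by
  obtain ⟨s, hs⟩ := exists_rat_add_conj_eq hM hMim hα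
  obtain ⟨k, hk0, hk4, hsq, hβ⟩ :=
    exists_int_sub_conj_sq_eq_mul (c := 2) two_pos hn hu (mod_cast hαu) hs
  have hβM : α - conj α ∈ M := sub_mem hα (conj_mem_of_finrank_eq_two hM hMim hα)
  interval_cases k <;> norm_num at hsq
  · refine .inr (eq_adjoin_of_sq_eq hM hβM (q := 2) two_ne_zero (by simp) ?_)
    rw [hβ, mul_pow, I_mul_sqrt_sq zero_le_two]
    norm_num
  · refine .inl (eq_adjoin_of_sq_eq hM hβM (q := 2) two_ne_zero (by simp) ?_)
    rw [hβ, mul_pow, I_sq]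
    norm_num

theorem eq_adjoin_of_sq_eq_three_mul (hM : Module.finrank ℚ M = 2)
    (hMim : ∃ z : M, (z : ℂ).im ≠ 0) {α u : ℂ} {n : ℕ} (hn : n ≠ 0) (hu : u ^ n = 1)
    (hα : α ∈ M) (hαu : α ^ 2 = 3 * u) : M = adjoin ℚ {I * (√3 : ℂ)} := by
  obtain ⟨s, hs⟩ := exists_rat_add_conj_eq hM hMim hα
  obtain ⟨k, hk0, hk4, hsq, hβ⟩ :=
    exists_int_sub_conj_sq_eq_mul (c := 3) three_pos hn hu (mod_cast hαu) hs
  have hβM : α - conj α ∈ M := sub_mem hα (conj_mem_of_finrank_eq_two hM hMim hα)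
  interval_cases k <;> norm_num at hsq
  · refine eq_adjoin_of_sq_eq hM hβM (q := 2) two_ne_zero (by simp) ?_
    rw [hβ, mul_pow, I_mul_sqrt_sq zero_le_three]
    norm_num
  · refine eq_adjoin_of_sq_eq hM hβM (q := 1) one_ne_zero (by simp) ?_
    rw [hβ, mul_pow, I_mul_sqrt_sq zero_le_three]
    norm_num

end QuadraticSubfield

theorem IsPrimitiveRoot.one_add_sq_of_four {ζ : ℂ} (hζ : IsPrimitiveRoot ζ 4) :
    (1 + ζ) ^ 2 = 2 * ζ := by
  have : ζ ^ 2 = -1 := (hζ.pow four_pos (by norm_num : 4 = 2 * 2)).eq_neg_one_of_two_right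
  linear_combination this

theorem IsPrimitiveRoot.one_add_sq_of_six {ζ : ℂ} (hζ : IsPrimitiveRoot ζ 6) :
    (1 + ζ) ^ 2 = 3 * ζ := by
  have := hζ.isRoot_cyclotomic (by norm_num)
  simp only [Polynomial.cyclotomic_six, Polynomial.IsRoot.def, Polynomial.eval_add,
    Polynomial.eval_sub, Polynomial.eval_pow, Polynomial.eval_X, Polynomial.eval_one] at this
  linear_combination this

theorem statement2_general (r t : ℕ) (ht : 0 < t)
    (ζ ω : ℂ) (hζ : IsPrimitiveRoot ζ r) (hω : IsPrimitiveRoot ω t)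
    (M : IntermediateField ℚ ℂ) (hM2 : Module.finrank ℚ M = 2)
    (hMim : ∃ z : M, (z : ℂ).im ≠ 0)
    (hmem : ω * (1 + ζ) ∈ M) :
    (r = 4 → M = IntermediateField.adjoin ℚ {Complex.I} ∨
      M = IntermediateField.adjoin ℚ {Complex.I * (Real.sqrt 2 : ℂ)}) ∧
    (r = 6 → M = IntermediateField.adjoin ℚ {Complex.I * (Real.sqrt 3 : ℂ)}) := by
  have hu : (ζ * ω ^ 2) ^ (r * t) = 1 := by
    rw [show (ζ * ω ^ 2) ^ (r * t) = (ζ ^ r) ^ t * (ω ^ t) ^ (2 * r) by ring,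
      hζ.pow_eq_one, hω.pow_eq_one, one_pow, one_pow, one_mul]
  refine ⟨fun hr => ?_, fun hr => ?_⟩
  · subst hr
    refine eq_adjoin_of_sq_eq_two_mul hM2 hMim (by positivity) hu hmem ?_
    rw [mul_pow, hζ.one_add_sq_of_four]
    ring
  · subst hr
    refine eq_adjoin_of_sq_eq_three_mul hM2 hMim (by positivity) hu hmem ?_
    rw [mul_pow, hζ.one_add_sq_of_six]
    ring

/-- Let `r ∈ {4,6}`, let `ζ` be a primitive `r`-th root of unity in `ℂ`, let `ω`
be a root of unity (of some order `t`), and suppose `ω(1+ζ)` lies in an imaginary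
quadratic field `M ⊆ ℂ`. If `r = 4` then `M = ℚ(√-1)` or `M = ℚ(√-2)`; if `r = 6`
then `M = ℚ(√-3)`. -/
theorem statement2 (r t : ℕ) (hr : r = 4 ∨ r = 6) (ht : 0 < t)
    (ζ ω : ℂ) (hζ : IsPrimitiveRoot ζ r) (hω : IsPrimitiveRoot ω t)
    (M : IntermediateField ℚ ℂ) (hM2 : Module.finrank ℚ M = 2)
    (hMim : ∃ z : M, (z : ℂ).im ≠ 0)
    (hmem : ω * (1 + ζ) ∈ M) :
    (r = 4 → M = IntermediateField.adjoin ℚ {Complex.I} ∨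
      M = IntermediateField.adjoin ℚ {Complex.I * (Real.sqrt 2 : ℂ)}) ∧
    (r = 6 → M = IntermediateField.adjoin ℚ {Complex.I * (Real.sqrt 3 : ℂ)}) :=
  statement2_general r t ht ζ ω hζ hω M hM2 hMim hmem
end

section
/- Let ρ be any faithful 2-dimensional complex representation of GL₂(ℤ/3ℤ). Then for any element g ∈ GL₂(ℤ/3ℤ) of order 8, the trace of ρ(g) does not lie in ℚ. -/
/-!
Let `A = ρ g`, of order 8 since `ρ` is faithful. The center of `GL₂(𝔽₃)` consists of scalars
`c` with `c² = 1`, so faithfulness forbids `A` or `A²` from being scalar (that would give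
`g² = 1` or `g⁴ = 1`). As `A` is not scalar, `1` and `A` are linearly independent, and by
Cayley–Hamilton `A² = t A - d` with `t = tr A`, `d = det A`; so `A⁸ = 1` says that the remainder
of `X⁸` modulo `X² - t X + d` is `1`. For rational `t` this forces `t = 0`, but then `A² = -d`
is scalar.
-/

open Matrix

theorem Matrix.sq_eq_trace_smul_sub_det_smul_one {R : Type*} [CommRing R]
    (A : Matrix (Fin 2) (Fin 2) R) : A ^ 2 = A.trace • A - A.det • 1 := by
  nontriviality R
  have h := A.aeval_self_charpoly
  rw [charpoly_fin_two] at h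
  simp only [map_add, map_sub, map_pow, Polynomial.aeval_X, Polynomial.aeval_C, map_mul,
    Algebra.algebraMap_eq_smul_one, smul_mul_assoc, one_mul] at h
  rw [← sub_eq_zero, ← h]
  abel

theorem Subgroup.mem_center_of_map_mem_center {G H : Type*} [Group G] [Group H] {f : G →* H}
    (hf : Function.Injective f) {x : G} (hx : f x ∈ center H) : x ∈ center G :=
  mem_center_iff.2 fun y => hf <| by simp only [map_mul, mem_center_iff.1 hx]

theorem Matrix.GeneralLinearGroup.pow_sub_one_eq_one_of_mem_center {n : Type*} [Fintype n]
    [DecidableEq n] {p : ℕ} [Fact p.Prime] {x : GL n (ZMod p)}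
    (hx : x ∈ Subgroup.center (GL n (ZMod p))) : x ^ (p - 1) = 1 := by
  rw [center_eq_range_scalar] at hx
  obtain ⟨u, rfl⟩ := hx
  rw [← map_pow, ZMod.units_pow_card_sub_one_eq_one, map_one]

theorem Rat.pow_eight_ne_sixteen (q : ℚ) : q ^ 8 ≠ 16 := by
  intro h
  have h2 : q ^ 2 = 2 := by
    rw [← pow_left_inj₀ (sq_nonneg q) zero_le_two (by norm_num : 4 ≠ 0), ← pow_mul]
    norm_num [h]
  exact (by norm_num : ¬IsSquare (2 : ℚ)) ⟨q, by rw [← h2, sq]⟩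

theorem sq_smul_add_smul_one_of_sq_eq {R A : Type*} [CommRing R] [Ring A] [Algebra R A] {a : A}
    {t d : R} (h : a ^ 2 = t • a - d • 1) (u v : R) :
    (u • a + v • 1) ^ 2 = (u ^ 2 * t + 2 * u * v) • a + (v ^ 2 - u ^ 2 * d) • 1 := by
  have hsq : (u • a + v • 1) ^ 2 = u ^ 2 • a ^ 2 + (2 * u * v) • a + v ^ 2 • 1 := by
    simp only [sq, add_mul, mul_add, smul_mul_smul_comm, mul_one, one_mul]
    module
  rw [hsq, h]
  module

-- `h₁` and `h₂` say that the remainder of `X⁸` modulo `X² - q X + d` is `1`.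
theorem eq_zero_of_pow_eight_relations {K : Type*} [Field K] [CharZero K] {q : ℚ} {d : K}
    (h₁ : ((q : K) ^ 3 - 2 * q * d) * (((q : K) ^ 3 - 2 * q * d) * q
      + 2 * (d ^ 2 - (q : K) ^ 2 * d)) = 0)
    (h₂ : (d ^ 2 - (q : K) ^ 2 * d) ^ 2 - ((q : K) ^ 3 - 2 * q * d) ^ 2 * d = 1) : q = 0 := by
  rcases mul_eq_zero.1 h₁ with hu | huv
  · obtain hq | hd : (q : K) = 0 ∨ (q : K) ^ 2 - 2 * d = 0 :=
      mul_eq_zero.1 (by linear_combination hu)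
    · exact_mod_cast hq
    · have hv : (d ^ 2 - (q : K) ^ 2 * d) ^ 2 = 1 := by
        linear_combination h₂ + d * ((q : K) ^ 3 - 2 * q * d) * hu
      have hq8 : (q : K) ^ 8 = 16 := by
        linear_combination
          16 * hv + ((q : K) ^ 2 - 2 * d) * ((q : K) ^ 4 + 4 * (q : K) ^ 2 * d - 4 * d ^ 2) * hd
      exact absurd (by exact_mod_cast hq8) q.pow_eight_ne_sixteen
  · -- eliminating `d` leaves a polynomial in `q` with positive coefficients
    have hd2 : 2 * d ^ 2 = 4 * (q : K) ^ 2 * d - (q : K) ^ 4 := by linear_combination huv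
    have hd : 6 * (q : K) ^ 6 * d = 7 / 4 * (q : K) ^ 8 - 1 := by
      linear_combination (1 / 2 * d ^ 2 - 2 * (q : K) ^ 2 * d - 7 / 4 * (q : K) ^ 4) * hd2 - h₂
    have hK : 2 * (q : K) ^ 16 + 272 * (q : K) ^ 8 + 32 = 0 := by
      linear_combination
        576 * (q : K) ^ 12 * hd2 + (328 * (q : K) ^ 8 - 192 * (q : K) ^ 6 * d + 32) * hd
    have hQ : 2 * q ^ 16 + 272 * q ^ 8 + 32 = 0 := by exact_mod_cast hK
    have : 0 < 2 * q ^ 16 + 272 * q ^ 8 + 32 := by positivity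
    exact absurd hQ this.ne'

theorem eq_zero_of_sq_eq_of_pow_eight_eq_one {K A : Type*} [Field K] [CharZero K] [Ring A]
    [Algebra K A] {a : A} (ha : a ∉ Set.range (algebraMap K A)) {q : ℚ} {d : K}
    (h2 : a ^ 2 = (q : K) • a - d • 1) (h8 : a ^ 8 = 1) : q = 0 := by
  have hind : ∀ s t : K, t • a + s • 1 = 1 → t = 0 ∧ s = 1 := by
    have h1 : (1 : A) ≠ 0 := fun h => ha ⟨0, by rw [map_zero, ← mul_one a, h, mul_zero]⟩
    have hli : LinearIndependent K ![1, a] := (LinearIndependent.pair_iff' h1).2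
      fun c hc => ha ⟨c, by rw [Algebra.algebraMap_eq_smul_one, hc]⟩
    intro s t h
    rw [← sub_eq_zero] at h
    obtain ⟨hs, ht⟩ := LinearIndependent.pair_iff.1 hli (s - 1) t (by rw [← h]; module)
    exact ⟨ht, sub_eq_zero.1 hs⟩
  have h4 : a ^ 4 = ((q : K) ^ 3 - 2 * q * d) • a + (d ^ 2 - (q : K) ^ 2 * d) • 1 := by
    rw [show a ^ 4 = (a ^ 2) ^ 2 by rw [← pow_mul], h2, sub_eq_add_neg, ← neg_smul,
      sq_smul_add_smul_one_of_sq_eq h2]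
    congr 2 <;> ring
  rw [show a ^ 8 = (a ^ 4) ^ 2 by rw [← pow_mul], h4, sq_smul_add_smul_one_of_sq_eq h2] at h8
  obtain ⟨hu, hv⟩ := hind _ _ h8
  exact eq_zero_of_pow_eight_relations (d := d) (by linear_combination hu) hv

/-- For any faithful 2-dimensional complex representation `ρ` of `GL₂(ℤ/3ℤ)` and
any element `g` of order 8, the trace of `ρ g` is irrational. -/
theorem statement8 (ρ : GL (Fin 2) (ZMod 3) →* GL (Fin 2) ℂ)
    (hρ : Function.Injective ρ)
    (g : GL (Fin 2) (ZMod 3)) (hg : orderOf g = 8) :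
    ∀ q : ℚ, Matrix.trace ((ρ g : GL (Fin 2) ℂ) : Matrix (Fin 2) (Fin 2) ℂ) ≠ (q : ℂ) := by
  intro q hq
  have hsq : ∀ x, (ρ x).val ∈ Set.range (scalar (Fin 2)) → x ^ 2 = 1 := fun x hx =>
    GeneralLinearGroup.pow_sub_one_eq_one_of_mem_center <| Subgroup.mem_center_of_map_mem_center
      hρ (GeneralLinearGroup.mem_center_iff_val_mem_range_scalar.2 hx)
  by_cases hscalar : (ρ g).val ∈ Set.range (scalar (Fin 2))
  · have := orderOf_dvd_of_pow_eq_one (hsq g hscalar)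
    rw [hg] at this
    omega
  have hA2 : (ρ g).val ^ 2 = (q : ℂ) • (ρ g).val - (ρ g).val.det • 1 := by
    rw [← hq, sq_eq_trace_smul_sub_det_smul_one]
  have hA8 : (ρ g).val ^ 8 = 1 := by
    rw [← Units.val_pow_eq_pow_val, ← map_pow, ← hg, pow_orderOf_eq_one, map_one, Units.val_one]
  have hq0 : q = 0 := eq_zero_of_sq_eq_of_pow_eight_eq_one hscalar hA2 hA8
  have hg4 : g ^ 4 = 1 := by
    rw [show 4 = 2 * 2 from rfl, pow_mul]
    refine hsq _ ⟨-(ρ g).val.det, ?_⟩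
    rw [map_pow, Units.val_pow_eq_pow_val, hA2, hq0]
    simp [smul_one_eq_diagonal]
  have := orderOf_dvd_of_pow_eq_one hg4
  rw [hg] at this
  omega
end

section
/- The quaternionic (faithful degree-2) representation of the quaternion group Q₈ is realizable over a field M of characteristic 0 if and only if the quaternion algebra (-1,-1)_M is split, i.e., isomorphic to M₂(M). -/
/-!
If `ρ : Q₈ → GL₂(M)` is faithful, put `A = ρ(a 1)` and `X = ρ(xa 0)`. Since `X` commutes with
`X² = A²`, the Cayley–Hamilton relation `A² = tr A • A - det A` shows that `tr A ≠ 0` would force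
`A` and `X` to commute, which `A X = X A⁻¹` and `A² ≠ 1` forbid; so `A² = -det A` is a scalar,
and `A⁴ = 1 ≠ A²` gives `A² = -1`. Then `A`, `X`, `A X` is a quaternion basis of `M₂(M)` with
`i² = j² = -1`, and the induced algebra map `(-1,-1)_M → M₂(M)` is injective because the
quaternion algebra is simple in characteristic `≠ 2`; it is bijective by dimension count.
Conversely `Q₈ ≅ {±1, ±i, ±j, ±k} ⊆ (-1,-1)_Mˣ`, and a splitting carries this into `GL₂(M)`.
-/

open Matrix
open scoped Quaternion

namespace QuaternionGroup

variable {n : ℕ} {G : Type*} [Group G] {A X : G}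

theorem pow_val_add [NeZero n] (hA : A ^ (2 * n) = 1) (i j : ZMod (2 * n)) :
    A ^ (i + j).val = A ^ i.val * A ^ j.val := by
  rw [ZMod.val_add, ← pow_eq_pow_mod _ hA, pow_add]

theorem pow_val_sub [NeZero n] (hA : A ^ (2 * n) = 1) (i j : ZMod (2 * n)) :
    A ^ (i - j).val = A ^ i.val * (A ^ j.val)⁻¹ := by
  rw [eq_mul_inv_iff_mul_eq, ← pow_val_add hA, sub_add_cancel]

theorem pow_mul_eq_mul_inv_pow (hAX : A * X = X * A⁻¹) (m : ℕ) :
    A ^ m * X = X * (A ^ m)⁻¹ := by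
  rw [← inv_pow]
  exact ((show SemiconjBy X A⁻¹ A from hAX.symm).pow_right m).symm

/-- `QuaternionGroup n` has the presentation `⟨a, x | a ^ (2n), x² = aⁿ, a x = x a⁻¹⟩`, with
`a = a 1` and `x = xa 0`. -/
def lift [NeZero n] (A X : G) (hA : A ^ (2 * n) = 1) (hX : X ^ 2 = A ^ n)
    (hAX : A * X = X * A⁻¹) : QuaternionGroup n →* G where
  toFun
    | .a i => A ^ i.val
    | .xa i => X * A ^ i.val
  map_one' := by
    show A ^ (0 : ZMod (2 * n)).val = 1
    rw [ZMod.val_zero, pow_zero]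
  map_mul' := by
    rintro (i | i) (j | j)
    · exact pow_val_add hA i j
    · simp only [a_mul_xa]
      rw [pow_val_sub hA, ← mul_assoc (A ^ i.val), pow_mul_eq_mul_inv_pow hAX]
      group
    · simp only [xa_mul_a]
      rw [pow_val_add hA, mul_assoc]
    · simp only [xa_mul_xa]
      have hn : (n : ZMod (2 * n)).val = n := by
        rw [ZMod.val_natCast, Nat.mod_eq_of_lt]
        have := NeZero.pos n
        omega
      rw [pow_val_sub hA, pow_val_add hA, hn, mul_assoc X, ← mul_assoc _ X,
        pow_mul_eq_mul_inv_pow hAX, ← hX, sq]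
      group

@[simp]
theorem lift_a [NeZero n] (A X : G) (hA : A ^ (2 * n) = 1) (hX : X ^ 2 = A ^ n)
    (hAX : A * X = X * A⁻¹) (i : ZMod (2 * n)) : lift A X hA hX hAX (a i) = A ^ i.val :=
  rfl

/-- `a 2` lies in every nontrivial subgroup of `Q₈`, in particular in every nontrivial kernel. -/
theorem injective_of_map_a_two_ne_one {H : Type*} [Group H] (f : QuaternionGroup 2 →* H)
    (hf : f (a 2) ≠ 1) : Function.Injective f := by
  have key : ∀ g : QuaternionGroup 2, g ≠ 1 → g = a 2 ∨ g ^ 2 = a 2 := by decide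
  rw [injective_iff_map_eq_one]
  intro g hg
  by_contra hne
  rcases key g hne with rfl | hsq
  · exact hf hg
  · exact hf (by rw [← hsq, map_pow, hg, one_pow])

end QuaternionGroup

namespace QuaternionAlgebra

section Simple

variable {K A : Type*} [Field K] [Ring A] [Algebra K A] {c₁ c₃ : K}

/-- Conjugating by `i`, `j`, `k` flips the signs of two of the three imaginary coordinates, so a
suitable combination of `x` and its conjugates isolates the real part. -/
theorem four_mul_re_smul_one (x : ℍ[K,c₁,0,c₃]) :
    (4 * c₁ * c₃ * x.re) • (1 : ℍ[K,c₁,0,c₃]) =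
      (c₁ * c₃) • x + c₃ • ((Basis.self K).i * x * (Basis.self K).i)
        + c₁ • ((Basis.self K).j * x * (Basis.self K).j)
        - (Basis.self K).k * x * (Basis.self K).k := by
  ext <;> simp <;> ring

theorem re_eq_zero_of_map_eq_zero [Nontrivial A] (f : ℍ[K,c₁,0,c₃] →ₐ[K] A)
    (h2 : (2 : K) ≠ 0) (hc₁ : c₁ ≠ 0) (hc₃ : c₃ ≠ 0) {x : ℍ[K,c₁,0,c₃]} (hx : f x = 0) :
    x.re = 0 := by
  have h := congrArg f (four_mul_re_smul_one x)
  simp only [map_smul, map_one, map_add, map_sub, map_mul, hx, mul_zero, zero_mul, smul_zero,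
    add_zero, sub_zero, smul_eq_zero, one_ne_zero, or_false] at h
  have h4 : (4 : K) ≠ 0 := by
    rw [show (4 : K) = 2 * 2 by norm_num]
    exact mul_ne_zero h2 h2
  simpa [h4, hc₁, hc₃] using h

theorem injective_algHom [Nontrivial A] (f : ℍ[K,c₁,0,c₃] →ₐ[K] A)
    (h2 : (2 : K) ≠ 0) (hc₁ : c₁ ≠ 0) (hc₃ : c₃ ≠ 0) : Function.Injective f := by
  rw [injective_iff_map_eq_zero]
  intro x hx
  have hre (y : ℍ[K,c₁,0,c₃]) : (x * y).re = 0 :=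
    re_eq_zero_of_map_eq_zero f h2 hc₁ hc₃ (by rw [map_mul, hx, zero_mul])
  have h1 := hre 1
  have hi := hre (Basis.self K).i
  have hj := hre (Basis.self K).j
  have hk := hre (Basis.self K).k
  simp only [mul_one, Basis.i_self, re_mul, mul_zero, zero_add, add_zero, zero_mul, sub_zero,
    mul_eq_zero, Basis.j_self, Basis.k_self, zero_sub, neg_eq_zero] at h1 hi hj hk
  ext <;> simp_all

theorem Basis.nonempty_algEquiv_matrix (q : Basis (Matrix (Fin 2) (Fin 2) K) c₁ 0 c₃)
    (h2 : (2 : K) ≠ 0) (hc₁ : c₁ ≠ 0) (hc₃ : c₃ ≠ 0) :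
    Nonempty (ℍ[K,c₁,0,c₃] ≃ₐ[K] Matrix (Fin 2) (Fin 2) K) := by
  have hinj := injective_algHom q.liftHom h2 hc₁ hc₃
  have hrank : Module.finrank K ℍ[K,c₁,0,c₃] = Module.finrank K (Matrix (Fin 2) (Fin 2) K) := by
    simp [finrank_eq_four, Module.finrank_matrix]
  have hsurj : Function.Surjective q.liftHom :=
    (LinearMap.injective_iff_surjective_of_finrank_eq_finrank (f := q.liftHom.toLinearMap)
      hrank).mp hinj
  exact ⟨AlgEquiv.ofBijective _ ⟨hinj, hsurj⟩⟩

end Simple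

section Units

variable {R : Type*} [CommRing R]

def unitI : ℍ[R,-1,-1]ˣ := ⟨⟨0, 1, 0, 0⟩, ⟨0, -1, 0, 0⟩, by ext <;> simp, by ext <;> simp⟩

def unitJ : ℍ[R,-1,-1]ˣ := ⟨⟨0, 0, 1, 0⟩, ⟨0, 0, -1, 0⟩, by ext <;> simp, by ext <;> simp⟩

variable (R) in
def quaternionGroupToUnits : QuaternionGroup 2 →* ℍ[R,-1,-1]ˣ :=
  QuaternionGroup.lift unitI unitJ (by ext <;> simp [unitI, pow_succ])
    (by ext <;> simp [unitI, unitJ, pow_succ]) (by ext <;> simp [unitI, unitJ])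

theorem injective_quaternionGroupToUnits (h : (-1 : R) ≠ 1) :
    Function.Injective (quaternionGroupToUnits R) := by
  refine QuaternionGroup.injective_of_map_a_two_ne_one _ fun h' => h ?_
  rw [quaternionGroupToUnits, QuaternionGroup.lift_a,
    show (2 : ZMod (2 * 2)).val = 2 from rfl] at h'
  simpa [unitI, pow_succ] using congrArg (fun u : ℍ[R,-1,-1]ˣ => (u : ℍ[R,-1,-1]).re) h'

end Units

end QuaternionAlgebra

namespace Matrix

theorem sq_eq_trace_smul_sub_det_smul {R : Type*} [CommRing R] (A : Matrix (Fin 2) (Fin 2) R) :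
    A ^ 2 = A.trace • A - A.det • 1 := by
  ext i j
  fin_cases i <;> fin_cases j <;>
    simp [sq, Matrix.mul_apply, trace_fin_two, det_fin_two] <;> ring

theorem GeneralLinearGroup.val_sq_eq_neg_one {K : Type*} [Field K] {A X : GL (Fin 2) K}
    (hA : A ^ 4 = 1) (hA2 : A ^ 2 ≠ 1) (hAX : A * X = X * A⁻¹) (hXA2 : Commute X (A ^ 2)) :
    (A : Matrix (Fin 2) (Fin 2) K) ^ 2 = -1 := by
  set a : Matrix (Fin 2) (Fin 2) K := ↑A
  have ha2 : a ^ 2 ≠ 1 := fun h => hA2 (Units.ext (by simpa using h))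
  have hCH := sq_eq_trace_smul_sub_det_smul a
  have htr : a.trace = 0 := by
    by_contra ht
    have hXa : Commute (X : Matrix (Fin 2) (Fin 2) K) a := by
      have h := hXA2.units_val
      rw [Units.val_pow_eq_pow_val, hCH] at h
      rw [← Commute.smul_right_iff₀ ht]
      simpa using h.add_right ((Commute.one_right _).smul_right a.det)
    apply hA2
    have hXA : X * A = X * A⁻¹ := by rw [← hAX]; exact Units.ext hXa.eq
    rw [sq]
    nth_rw 2 [mul_left_cancel hXA]
    exact mul_inv_cancel A
  have hsq : a ^ 2 = -(a.det • 1) := by rw [hCH, htr, zero_smul, zero_sub]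
  have hdet : a.det ^ 2 = 1 := by
    have h4 : a ^ 2 * a ^ 2 = 1 := by
      rw [← pow_add]
      exact congrArg Units.val hA
    rw [hsq] at h4
    simpa [sq] using congrFun₂ h4 0 0
  obtain hd | hd := sq_eq_one_iff.mp hdet
  · rw [hsq, hd, one_smul]
  · exact absurd (by rw [hsq, hd, neg_smul, one_smul, neg_neg]) ha2

end Matrix

namespace QuaternionGroup

open QuaternionAlgebra

theorem nonempty_algEquiv_matrix_of_injective {K : Type*} [Field K] (h2 : (2 : K) ≠ 0)
    (ρ : QuaternionGroup 2 →* GL (Fin 2) K) (hρ : Function.Injective ρ) :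
    Nonempty (ℍ[K,-1,-1] ≃ₐ[K] Matrix (Fin 2) (Fin 2) K) := by
  set A := ρ (a 1)
  set X := ρ (xa 0)
  have hA : A ^ 4 = 1 := by
    rw [← map_pow, show (a 1 : QuaternionGroup 2) ^ 4 = 1 by decide, map_one]
  have hA2 : A ^ 2 ≠ 1 := by
    rw [← map_pow]
    exact (map_ne_one_iff ρ hρ).mpr (by decide)
  have hX : X ^ 2 = A ^ 2 := by
    rw [← map_pow, ← map_pow]
    exact congrArg ρ (by decide)
  have hAX : A * X = X * A⁻¹ := by
    rw [← map_inv, ← map_mul, ← map_mul]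
    exact congrArg ρ (by decide)
  have hi := GeneralLinearGroup.val_sq_eq_neg_one hA hA2 hAX (hX ▸ Commute.self_pow X 2)
  have hj : (X : Matrix (Fin 2) (Fin 2) K) ^ 2 = -1 := by
    rw [← hi, ← Units.val_pow_eq_pow_val, hX, Units.val_pow_eq_pow_val]
  have hinv : ((A⁻¹ : GL (Fin 2) K) : Matrix (Fin 2) (Fin 2) K) = -A :=
    Units.inv_eq_of_mul_eq_one_right (by rw [mul_neg, ← sq, hi, neg_neg])
  have hXA : (X : Matrix (Fin 2) (Fin 2) K) * A = -(A * X) := by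
    rw [← Units.val_mul A X, hAX, Units.val_mul, hinv, mul_neg, neg_neg]
  let q : Basis (Matrix (Fin 2) (Fin 2) K) (-1 : K) 0 (-1) :=
    { i := A
      j := X
      k := A * X
      i_mul_i := by rw [← sq, hi]; simp
      j_mul_j := by rw [← sq, hj]; simp
      i_mul_j := rfl
      j_mul_i := by rw [hXA, zero_smul, zero_sub] }
  exact q.nonempty_algEquiv_matrix h2 (by simp) (by simp)

end QuaternionGroup

/-- The quaternionic (faithful degree-2) representation of the quaternion group
`Q₈` is realizable over a field `M` of characteristic zero if and only if the
quaternion algebra `(-1,-1)_M` is split, i.e. isomorphic to `M₂(M)`. -/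
theorem statement10 (M : Type*) [Field M] [CharZero M] :
    (∃ ρ : QuaternionGroup 2 →* GL (Fin 2) M, Function.Injective ρ) ↔
      Nonempty (ℍ[M,-1,-1] ≃ₐ[M] Matrix (Fin 2) (Fin 2) M) := by
  constructor
  · rintro ⟨ρ, hρ⟩
    exact QuaternionGroup.nonempty_algEquiv_matrix_of_injective two_ne_zero ρ hρ
  · rintro ⟨e⟩
    exact ⟨(Units.map e.toMonoidHom).comp (QuaternionAlgebra.quaternionGroupToUnits M),
      (Units.map_injective e.injective).comp
        (QuaternionAlgebra.injective_quaternionGroupToUnits (by norm_num))⟩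
end
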